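/- Under Assumption A1 and the assembling property with Â bijective, the following hold: (i) if û ∈ Û solves Â û = f̂, then (R û, A R û − f) solves the subdomain flux formulation; (ii) if (u, t) ∈ range(R) × ker(R^⊤) solves the subdomain flux formulation, then there exists û ∈ Û solving Â û = f̂ with u = R û and t = A R û − f; (iii) the solution (u, t) of the subdomain flux formulation is unique; (iv) the map 𝒮 : U* → range(R) × ker(R^⊤), 𝒮 f := (R Â^{-1} R^⊤ f, A R Â^{-1} R^⊤ f − f), is a well-defined bounded linear solution operator for the subdomain flux formulation, i.e. A (𝒮f)₁ − (𝒮f)₂ = f for all f, and 𝒮(A u − t) = (u, t) for all (u, t) ∈ range(R) × ker(R^⊤). -/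

import Mathlib

/-! A flux `t ∈ ker R^⊤` is invisible to `R^⊤`, so `R^⊤ (A R û - t) = Â û`: a flux solution
`(R û, t)` with data `f` is exactly a solution `û` of `Â û = R^⊤ f`, and `t` is recovered as
`A R û - f`. Hence `Â⁻¹` yields the solution operator, and its left-inverse property gives
uniqueness. -/

/-- The transpose (dual map) `B^⊤ : Y* → X*` of a bounded linear operator `B : X → Y`. -/
noncomputable def trOp {X Y : Type*} [NormedAddCommGroup X] [NormedSpace ℂ X]
    [NormedAddCommGroup Y] [NormedSpace ℂ Y] (B : X →L[ℂ] Y) :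
    (Y →L[ℂ] ℂ) →L[ℂ] (X →L[ℂ] ℂ) :=
  (ContinuousLinearMap.compL ℂ X Y ℂ).flip B

section SubdomainFlux

variable {Uhat U : Type*} [NormedAddCommGroup Uhat] [NormedSpace ℂ Uhat]
  [NormedAddCommGroup U] [NormedSpace ℂ U]

theorem trOp_sub_eq_zero_iff (R : Uhat →L[ℂ] U) (φ ψ : U →L[ℂ] ℂ) :
    trOp R (φ - ψ) = 0 ↔ trOp R φ = trOp R ψ := by
  rw [map_sub, sub_eq_zero]

variable (R : Uhat →L[ℂ] U) (A : U →L[ℂ] (U →L[ℂ] ℂ))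

/-- The assembled operator `Â = R^⊤ A R`. -/
noncomputable def assembled : Uhat →L[ℂ] (Uhat →L[ℂ] ℂ) :=
  trOp R ∘L A ∘L R

theorem trOp_sub_flux {t : U →L[ℂ] ℂ} (ht : trOp R t = 0) (uhat : Uhat) :
    trOp R (A (R uhat) - t) = assembled R A uhat := by
  rw [map_sub, ht, sub_zero]
  rfl

noncomputable def solutionOp (Ahatinv : (Uhat →L[ℂ] ℂ) →L[ℂ] Uhat) :
    (U →L[ℂ] ℂ) →L[ℂ] U × (U →L[ℂ] ℂ) :=
  let T := R ∘L Ahatinv ∘L trOp R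
  T.prod (A ∘L T - ContinuousLinearMap.id ℂ _)

variable {R A} {Ahatinv : (Uhat →L[ℂ] ℂ) →L[ℂ] Uhat}

theorem solutionOp_apply (g : U →L[ℂ] ℂ) :
    solutionOp R A Ahatinv g =
      (R (Ahatinv (trOp R g)), A (R (Ahatinv (trOp R g))) - g) :=
  rfl

theorem solutionOp_solves (hright : Function.RightInverse Ahatinv (assembled R A))
    (g : U →L[ℂ] ℂ) :
    (solutionOp R A Ahatinv g).1 ∈ Set.range R ∧
      trOp R (solutionOp R A Ahatinv g).2 = 0 ∧
      A (solutionOp R A Ahatinv g).1 - (solutionOp R A Ahatinv g).2 = g := by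
  rw [solutionOp_apply]
  exact ⟨⟨_, rfl⟩, (trOp_sub_eq_zero_iff R _ _).2 (hright _), sub_sub_cancel _ _⟩

theorem solutionOp_apply_flux (hleft : Function.LeftInverse Ahatinv (assembled R A))
    {u : U} {t : U →L[ℂ] ℂ} (hu : u ∈ Set.range R) (ht : trOp R t = 0) :
    solutionOp R A Ahatinv (A u - t) = (u, t) := by
  obtain ⟨uhat, rfl⟩ := hu
  rw [solutionOp_apply, trOp_sub_flux R A ht, hleft, sub_sub_cancel]

end SubdomainFlux

theorem statement0
    {Uhat U : Type*}
    [NormedAddCommGroup Uhat] [InnerProductSpace ℂ Uhat]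
    [NormedAddCommGroup U] [InnerProductSpace ℂ U]
    (R : Uhat →L[ℂ] U)
    (A : U →L[ℂ] (U →L[ℂ] ℂ))
    (f : U →L[ℂ] ℂ)
    -- `Â = R^⊤ A R` is bijective with bounded inverse `Âinv`
    (Ahatinv : (Uhat →L[ℂ] ℂ) →L[ℂ] Uhat)
    (hAhat_left : ∀ uhat : Uhat, Ahatinv (trOp R (A (R uhat))) = uhat)
    (hAhat_right : ∀ g : Uhat →L[ℂ] ℂ, trOp R (A (R (Ahatinv g))) = g) :
    -- (i)
    (∀ uhat : Uhat, trOp R (A (R uhat)) = trOp R f →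
      R uhat ∈ Set.range R ∧ trOp R (A (R uhat) - f) = 0 ∧
        A (R uhat) - (A (R uhat) - f) = f) ∧
    -- (ii)
    (∀ (u : U) (t : U →L[ℂ] ℂ), u ∈ Set.range R → trOp R t = 0 → A u - t = f →
      ∃ uhat : Uhat, trOp R (A (R uhat)) = trOp R f ∧ u = R uhat ∧ t = A (R uhat) - f) ∧
    -- (iii) uniqueness
    (∀ (u u' : U) (t t' : U →L[ℂ] ℂ),
      u ∈ Set.range R → trOp R t = 0 → A u - t = f →
      u' ∈ Set.range R → trOp R t' = 0 → A u' - t' = f → u = u' ∧ t = t') ∧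
    -- (iv) the bounded linear solution operator `𝒮`
    (∃ S : (U →L[ℂ] ℂ) →L[ℂ] U × (U →L[ℂ] ℂ),
      (∀ g, S g = (R (Ahatinv (trOp R g)), A (R (Ahatinv (trOp R g))) - g)) ∧
      (∀ g, (S g).1 ∈ Set.range R ∧ trOp R (S g).2 = 0 ∧ A (S g).1 - (S g).2 = g) ∧
      (∀ (u : U) (t : U →L[ℂ] ℂ), u ∈ Set.range R → trOp R t = 0 →
        S (A u - t) = (u, t))) := by
  have hleft : Function.LeftInverse Ahatinv (assembled R A) := hAhat_left
  refine ⟨fun uhat h => ⟨⟨uhat, rfl⟩, (trOp_sub_eq_zero_iff R _ _).2 h, sub_sub_cancel _ _⟩,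
    ?_, ?_, ⟨solutionOp R A Ahatinv, solutionOp_apply, solutionOp_solves hAhat_right,
      fun u t hu ht => solutionOp_apply_flux hleft hu ht⟩⟩
  · rintro _ t ⟨uhat, rfl⟩ ht rfl
    exact ⟨uhat, (trOp_sub_flux R A ht uhat).symm, rfl, (sub_sub_cancel _ _).symm⟩
  · intro u u' t t' hu ht hf hu' ht' hf'
    have h := solutionOp_apply_flux hleft hu ht
    rw [hf, ← hf', solutionOp_apply_flux hleft hu' ht'] at h
    exact Prod.ext_iff.1 h.symm
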